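/- Any finite subgroup of SL(2,ℂ) of order 8 is isomorphic either to the cyclic group ℤ/8ℤ or to the quaternion group Q8. -/
import Mathlib

lemma sl2c_invol (g : Matrix.SpecialLinearGroup (Fin 2) ℂ) (hg : g ^ 2 = 1) :
    g = 1 ∨ g = -1 := by
  set M : Matrix (Fin 2) (Fin 2) ℂ := ↑g with hM
  have hdet : M.det = 1 := g.2
  have hsq : M * M = 1 := by
    have := congrArg (fun x : Matrix.SpecialLinearGroup (Fin 2) ℂ => (x : Matrix (Fin 2) (Fin 2) ℂ)) hg
    simpa [pow_two] using this
  have hadj : M * M.adjugate = 1 := by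
    rw [Matrix.mul_adjugate, hdet, one_smul]
  have heq : M = M.adjugate := by
    calc M = M * (M * M.adjugate) := by rw [hadj, mul_one]
    _ = (M * M) * M.adjugate := by rw [mul_assoc]
    _ = M.adjugate := by rw [hsq, one_mul]
  rw [Matrix.adjugate_fin_two] at heq
  have h00 : M 0 0 = M 1 1 := by
    have := congrFun (congrFun heq 0) 0; simpa using this
  have h01 : M 0 1 = 0 := by
    have := congrFun (congrFun heq 0) 1
    simp at this
    linear_combination this / 2
  have h10 : M 1 0 = 0 := by
    have := congrFun (congrFun heq 1) 0
    simp at this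
    linear_combination this / 2
  have hd : M 0 0 * M 0 0 = 1 := by
    have h2 := hdet
    rw [Matrix.det_fin_two, h01, h10, ← h00] at h2
    simpa using h2
  have h11 := h00.symm
  rcases mul_self_eq_one_iff.mp hd with h | h
  · left
    apply Subtype.ext
    ext i j
    rw [← hM]
    fin_cases i <;> fin_cases j <;>
      simp [h01, h10, h, h11.trans h ▸ h, Matrix.one_apply, ← h00]
  · right
    apply Subtype.ext
    ext i j
    rw [← hM]
    fin_cases i <;> fin_cases j <;>
      simp [h01, h10, h, Matrix.one_apply, ← h00]

theorem finite_subgroup_SL2C_order_eight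
    (S : Subgroup (Matrix.SpecialLinearGroup (Fin 2) ℂ))
    (h8 : Nat.card S = 8) :
    Nonempty (S ≃* Multiplicative (ZMod 8)) ∨ Nonempty (S ≃* QuaternionGroup 2) := by
  classical
  have hfin : Finite S := Nat.finite_of_card_ne_zero (by omega)
  have huniq : ∀ g : S, g ^ 2 = 1 → g ≠ 1 →
      (g : Matrix.SpecialLinearGroup (Fin 2) ℂ) = -1 := by
    intro g hg hne
    have hgc : (g : Matrix.SpecialLinearGroup (Fin 2) ℂ) ^ 2 = 1 := by
      have := congrArg (Subtype.val) hg
      simpa using this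
    rcases sl2c_invol _ hgc with h | h
    · exact absurd (Subtype.ext h) hne
    · exact h
  by_cases hcyc : ∃ g : S, orderOf g = 8
  · left
    obtain ⟨g, hg⟩ := hcyc
    have hc : IsCyclic S := isCyclic_of_orderOf_eq_card g (by rw [hg, h8])
    have e := zmodCyclicMulEquiv hc
    rw [h8] at e
    exact ⟨e.symm⟩
  · right
    push_neg at hcyc
    have hdvd : ∀ g : S, orderOf g ∣ 8 := fun g => h8 ▸ orderOf_dvd_natCard g
    have hdvd4 : ∀ g : S, orderOf g ∣ 4 := by
      intro g
      obtain ⟨k, hk3, hkeq⟩ := (Nat.dvd_prime_pow Nat.prime_two).mp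
        (show orderOf g ∣ 2 ^ 3 from hdvd g)
      have hk2 : k ≤ 2 := by
        by_contra h
        have hk : k = 3 := by omega
        rw [hk] at hkeq
        exact hcyc g (by simpa using hkeq)
      rw [hkeq]
      calc (2:ℕ) ^ k ∣ 2 ^ 2 := pow_dvd_pow 2 hk2
        _ = 4 := by norm_num
    have h4 : ∀ g : S, g ^ 4 = 1 := fun g => orderOf_dvd_iff_pow_eq_one.mp (hdvd4 g)
    -- there is an element of order 4
    have hx : ∃ x : S, orderOf x = 4 := by
      by_contra hno
      push_neg at hno
      have h2 : ∀ g : S, g ^ 2 = 1 := by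
        intro g
        apply orderOf_dvd_iff_pow_eq_one.mp
        obtain ⟨k, hk2, hkeq⟩ := (Nat.dvd_prime_pow Nat.prime_two).mp
          (show orderOf g ∣ 2 ^ 2 from hdvd4 g)
        have : k ≤ 1 := by
          by_contra h
          have hk : k = 2 := by omega
          rw [hk] at hkeq
          exact hno g (by simpa using hkeq)
        rw [hkeq]
        calc (2:ℕ) ^ k ∣ 2 ^ 1 := pow_dvd_pow 2 this
          _ = 2 := by norm_num
      letI : Fintype S := Fintype.ofFinite S
      obtain ⟨t, ht⟩ := exists_prime_orderOf_dvd_card (G := S) 2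
        (by rw [← Nat.card_eq_fintype_card, h8]; norm_num)
      have htne : t ≠ 1 := by
        intro h; rw [h, orderOf_one] at ht; norm_num at ht
      have hall : ∀ g : S, g = 1 ∨ g = t := by
        intro g
        by_cases hg1 : g = 1
        · exact Or.inl hg1
        · right
          have hg := huniq g (h2 g) hg1
          have htt := huniq t (h2 t) htne
          exact Subtype.ext (hg.trans htt.symm)
      have hle : Nat.card S ≤ 2 := by
        have hinj : Function.Injective (fun g : S => (decide (g = 1) : Bool)) := by
          intro a b hab
          rcases hall a with ha | ha <;> rcases hall b with hb | hb <;>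
            simp [ha, hb] at hab ⊢ <;> simp [ha, hb, htne] at hab ⊢
        calc Nat.card S ≤ Nat.card Bool := Nat.card_le_card_of_injective _ hinj
          _ = 2 := by simp
      omega
    obtain ⟨x, hx4⟩ := hx
    have hx2ne : x ^ 2 ≠ 1 := by
      intro h
      have := orderOf_dvd_iff_pow_eq_one.mpr h
      rw [hx4] at this
      norm_num at this
    have hx2sq : (x ^ 2) ^ 2 = 1 := by
      rw [← pow_mul]; exact h4 x
    have hx2 : ((x ^ 2 : S) : Matrix.SpecialLinearGroup (Fin 2) ℂ) = -1 :=
      huniq _ hx2sq hx2ne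
    -- every element outside ⟨x⟩ squares to x^2
    have hkey : ∀ g : S, g ∉ Subgroup.zpowers x → g ^ 2 = x ^ 2 := by
      intro g hg
      have hgne1 : g ≠ 1 := fun h => hg (h ▸ one_mem _)
      have hg2ne : g ^ 2 ≠ 1 := by
        intro h
        have hgm := huniq g h hgne1
        have : g = x ^ 2 := Subtype.ext (hgm.trans hx2.symm)
        exact hg (this ▸ pow_mem (Subgroup.mem_zpowers x) 2)
      have hg2sq : (g ^ 2) ^ 2 = 1 := by rw [← pow_mul]; exact h4 g
      exact Subtype.ext ((huniq (g ^ 2) hg2sq hg2ne).trans hx2.symm)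
    -- pick y outside ⟨x⟩
    have hyex : ∃ y : S, y ∉ Subgroup.zpowers x := by
      by_contra hall
      push_neg at hall
      have htop : Subgroup.zpowers x = ⊤ := by
        ext g; simpa using hall g
      have : Nat.card (Subgroup.zpowers x) = 4 := by
        rw [Nat.card_zpowers, hx4]
      rw [htop] at this
      rw [Subgroup.card_top, h8] at this
      omega
    obtain ⟨y, hy⟩ := hyex
    have hy2 : y ^ 2 = x ^ 2 := hkey y hy
    have hxy : x * y ∉ Subgroup.zpowers x := by
      intro h
      have := mul_mem (inv_mem (Subgroup.mem_zpowers x)) h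
      exact hy (by simpa [← mul_assoc] using this)
    have hxyxy : (x * y) ^ 2 = x ^ 2 := hkey _ hxy
    have hrel : y * x * y = x := by
      have h1 : x * (y * x * y) = x * x := by
        have : (x * y) * (x * y) = x * x := by
          rw [← pow_two, ← pow_two]; exact hxyxy
        calc x * (y * x * y) = (x * y) * (x * y) := by group
          _ = x * x := this
      exact mul_left_cancel h1
    have hconj : y * x * y⁻¹ = x⁻¹ := by
      calc y * x * y⁻¹ = (y * x * y) * y⁻¹ * y⁻¹ := by group
        _ = x * y⁻¹ * y⁻¹ := by rw [hrel]
        _ = x * (y ^ 2)⁻¹ := by group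
        _ = x * (x ^ 2)⁻¹ := by rw [hy2]
        _ = x⁻¹ := by group
    have hconjz : ∀ m : ℤ, y * x ^ m * y⁻¹ = x ^ (-m) := by
      intro m
      rw [← conj_zpow, hconj, inv_zpow, zpow_neg]
    -- the power map from ZMod 4
    set pw : ZMod (2 * 2) → S := fun i => x ^ ((i.val : ℤ)) with hpw
    have pw_eq : ∀ m : ℤ, x ^ m = pw (m : ZMod (2 * 2)) := by
      intro m
      show _ = x ^ _
      rw [zpow_eq_zpow_iff_modEq, hx4]
      have hv : ((ZMod.val ((m : ZMod (2 * 2))) : ℤ)) = m % (2 * 2 : ℕ) :=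
        ZMod.val_intCast m
      unfold Int.ModEq
      rw [hv]
      norm_num [Int.emod_emod_of_dvd]
    have pw_cast : ∀ i : ZMod (2 * 2), (((i.val : ℤ)) : ZMod (2 * 2)) = i := by
      intro i
      push_cast
      simp [ZMod.natCast_val, ZMod.cast_id]
    have pw_mul : ∀ i j : ZMod (2 * 2), pw i * pw j = pw (i + j) := by
      intro i j
      show x ^ _ * x ^ _ = _
      rw [← zpow_add, pw_eq]
      congr 1
      try push_cast [pw_cast]
      try ring
    have y_pw : ∀ i : ZMod (2 * 2), y * pw i = pw (-i) * y := by
      intro i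
      have h1 : y * pw i = x ^ (-(i.val : ℤ)) * y := by
        rw [← hconjz (i.val : ℤ)]
        show y * pw i = y * x ^ ((i.val : ℤ)) * y⁻¹ * y
        rw [hpw]
        group
      rw [h1, pw_eq]
      congr 2
      push_cast [pw_cast]
      try ring
    have yy : y * y = pw 2 := by
      have h1 : y * y = x ^ ((2 : ℤ)) := by
        rw [← pow_two, hy2]
        norm_cast
      rw [h1, pw_eq]
      norm_num
    -- build the isomorphism
    let φ : QuaternionGroup 2 → S := fun q =>
      match q with
      | .a i => pw i
      | .xa i => y * pw i
    have φmul : ∀ p q : QuaternionGroup 2, φ (p * q) = φ p * φ q := by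
      intro p q
      rcases p with i | i <;> rcases q with j | j
      · show pw (i + j) = pw i * pw j
        rw [pw_mul]
      · show y * pw (j - i) = pw i * (y * pw j)
        have : pw i * y = y * pw (-i) := by
          rw [y_pw (-i), neg_neg]
        rw [← mul_assoc, this, mul_assoc, pw_mul]
        ring_nf
      · show y * pw (i + j) = (y * pw i) * pw j
        rw [mul_assoc, pw_mul]
      · show pw ((2 : ZMod (2*2)) + j - i) = (y * pw i) * (y * pw j)
        have h1 : pw i * y = y * pw (-i) := by
          rw [y_pw (-i), neg_neg]
        have hcalc : (y * pw i) * (y * pw j) = pw ((2 : ZMod (2*2)) + j - i) := by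
          calc (y * pw i) * (y * pw j) = y * (pw i * y) * pw j := by group
            _ = y * (y * pw (-i)) * pw j := by rw [h1]
            _ = (y * y) * (pw (-i) * pw j) := by group
            _ = pw 2 * pw (-i + j) := by rw [yy, pw_mul]
            _ = pw (2 + (-i + j)) := pw_mul _ _
            _ = pw ((2 : ZMod (2*2)) + j - i) := by ring_nf
        exact hcalc.symm
    have φone : φ 1 = 1 := by
      show pw 0 = 1
      show x ^ _ = 1
      norm_num
    let Φ : QuaternionGroup 2 →* S :=
      { toFun := φ, map_one' := φone, map_mul' := φmul }
    have pw_mem : ∀ i : ZMod (2 * 2), pw i ∈ Subgroup.zpowers x := fun i =>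
      zpow_mem (Subgroup.mem_zpowers x) _
    have pw_inj : ∀ i j : ZMod (2 * 2), pw i = pw j → i = j := by
      intro i j h
      have h2 : (((i.val : ℤ)) : ZMod (2 * 2)) = (((j.val : ℤ)) : ZMod (2 * 2)) := by
        rw [ZMod.intCast_eq_intCast_iff]
        have := zpow_eq_zpow_iff_modEq.mp h
        rw [hx4] at this
        exact_mod_cast this
      rwa [pw_cast, pw_cast] at h2
    have hinjΦ : Function.Injective Φ := by
      intro p q h
      rcases p with i | i <;> rcases q with j | j
      · exact congrArg QuaternionGroup.a (pw_inj i j h)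
      · exfalso
        have h' : pw i = y * pw j := h
        have hmem : y = pw i * (pw j)⁻¹ := by rw [h']; group
        exact hy (hmem.symm ▸ mul_mem (pw_mem i) (inv_mem (pw_mem j)))
      · exfalso
        have h' : y * pw i = pw j := h
        have hmem : y = pw j * (pw i)⁻¹ := by rw [← h']; group
        exact hy (hmem.symm ▸ mul_mem (pw_mem j) (inv_mem (pw_mem i)))
      · have h' : y * pw i = y * pw j := h
        exact congrArg QuaternionGroup.xa (pw_inj i j (mul_left_cancel h'))
    have hcard : Nat.card (QuaternionGroup 2) = Nat.card S := by
      rw [Nat.card_eq_fintype_card, QuaternionGroup.card, h8]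
    have hbij : Function.Bijective Φ :=
      (Nat.bijective_iff_injective_and_card Φ).mpr ⟨hinjΦ, hcard⟩
    exact ⟨(MulEquiv.ofBijective Φ hbij).symm⟩
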